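/- Let J be Hermitian positive definite of size U×U, H ∈ ℂ^{n×U}, w ∈ ℂ^n, and μ > 0. Define f = μ·wᴴH J⁻¹ Hᴴw. Then f = max_{ξ∈ℂ^U} [2√μ·Re(ξᴴHᴴw) − ξᴴJξ], i.e., the ratio term equals the supremum of its quadratic-transform surrogate, with the maximum attained at ξ = √μ·J⁻¹Hᴴw. -/
import Mathlib


open Matrix ComplexOrder

theorem stmt_10 {n U : ℕ} (J : Matrix (Fin U) (Fin U) ℂ) (hJ : J.PosDef)
    (H : Matrix (Fin n) (Fin U) ℂ) (w : Fin n → ℂ) (μ : ℝ) (hμ : 0 < μ)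
    (f : ℝ) (hf : f = μ * (star (Hᴴ *ᵥ w) ⬝ᵥ J⁻¹ *ᵥ (Hᴴ *ᵥ w)).re)
    (g : (Fin U → ℂ) → ℝ)
    (hg : ∀ ξ, g ξ = 2 * Real.sqrt μ * (star ξ ⬝ᵥ (Hᴴ *ᵥ w)).re
        - (star ξ ⬝ᵥ J *ᵥ ξ).re) :
    (∀ ξ, g ξ ≤ f) ∧ g (Real.sqrt μ • (J⁻¹ *ᵥ (Hᴴ *ᵥ w))) = f := by
  set b : Fin U → ℂ := Hᴴ *ᵥ w with hb
  set c : Fin U → ℂ := J⁻¹ *ᵥ b with hc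
  set s : ℝ := Real.sqrt μ with hs
  have hss : s * s = μ := Real.mul_self_sqrt hμ.le
  have hJc : J *ᵥ c = b := by
    rw [hc, mulVec_mulVec, Matrix.mul_nonsing_inv _
      (isUnit_iff_isUnit_det J |>.mp hJ.isUnit), one_mulVec]
  have hswap : ∀ x y : Fin U → ℂ, (star x ⬝ᵥ J *ᵥ y).re = (star y ⬝ᵥ J *ᵥ x).re := by
    intro x y
    have : star x ⬝ᵥ J *ᵥ y = star (star y ⬝ᵥ J *ᵥ x) := by
      rw [star_dotProduct, star_mulVec, hJ.1.eq, ← dotProduct_mulVec]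
    rw [this, Complex.star_def, Complex.conj_re]
  have hcb : (star c ⬝ᵥ b).re = (star b ⬝ᵥ c).re := by
    rw [star_dotProduct, Complex.star_def, Complex.conj_re]
  have expand : ∀ ξ : Fin U → ℂ, (star (ξ - s • c) ⬝ᵥ J *ᵥ (ξ - s • c)).re
      = (star ξ ⬝ᵥ J *ᵥ ξ).re - 2 * s * (star ξ ⬝ᵥ b).re + μ * (star b ⬝ᵥ c).re := by
    intro ξ
    have h1 : star (ξ - s • c) = star ξ - s • star c := by
      ext i; simp [Pi.sub_apply, Pi.smul_apply, Complex.real_smul]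
    have h2 : J *ᵥ (ξ - s • c) = J *ᵥ ξ - s • b := by
      rw [sub_eq_add_neg, mulVec_add, mulVec_neg, ← sub_eq_add_neg]
      congr 1
      have : J *ᵥ (s • c) = s • (J *ᵥ c) := by
        ext i; simp [mulVec, dotProduct, Complex.real_smul, Finset.mul_sum, mul_left_comm]
      rw [this, hJc]
    rw [h1, h2, sub_dotProduct, dotProduct_sub, dotProduct_sub,
      smul_dotProduct, smul_dotProduct, dotProduct_smul, dotProduct_smul]
    simp only [Complex.sub_re, Complex.real_smul, Complex.re_ofReal_mul]
    rw [hswap c ξ, hJc, hcb, ← hss]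
    ring
  have key : ∀ ξ : Fin U → ℂ, f - g ξ = (star (ξ - s • c) ⬝ᵥ J *ᵥ (ξ - s • c)).re := by
    intro ξ
    rw [expand, hg, hf]
    ring
  constructor
  · intro ξ
    have h0 : 0 ≤ (star (ξ - s • c) ⬝ᵥ J *ᵥ (ξ - s • c)).re :=
      hJ.posSemidef.re_dotProduct_nonneg _
    linarith [key ξ]
  · have := key (s • c)
    simp only [sub_self] at this
    have hz : (star (0 : Fin U → ℂ) ⬝ᵥ J *ᵥ (0 : Fin U → ℂ)).re = 0 := by simp
    rw [hz] at this
    linarith
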